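/- Let T > 0, ε ∈ (0,1), and let ũ : [-1,1] → ℝ be a C¹ function with ũ(x) ∈ [1-ε, 1+ε] for x < -ε and ũ(x) ∈ [-1-ε, -1+ε] for x > ε. Then the L² norm of the Burgers residual (u²/2)_x = ũ ũ_x over (0,T) × (-1,1) is at least √T (1-ε)² / (2√ε). In particular, it tends to infinity as ε → 0. -/

import Mathlib

/-! The residual `g' = (ũ²/2)'` has `L¹` mass at least `(1-ε)²` on `[-ε, ε]`: by continuity `ũ`
changes sign there, so `g = ũ²/2` falls from at least `(1-ε)²/2` to `0` and climbs back. By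
Cauchy–Schwarz on an interval of length `2ε` this forces `∫ g'² ≥ (1-ε)⁴/(2ε)`;
the time integral only contributes the factor `T`. -/

open Set MeasureTheory

theorem Continuous.mapsTo_Icc_of_mapsTo_Ioo {X Y : Type*} [TopologicalSpace X] [LinearOrder X]
    [OrderTopology X] [DenselyOrdered X] [TopologicalSpace Y] {f : X → Y} (hf : Continuous f)
    {a b : X} (hab : a < b) {s : Set Y} (hs : IsClosed s) (h : MapsTo f (Ioo a b) s) :
    MapsTo f (Icc a b) s := by
  simpa only [closure_Ioo hab.ne, hs.closure_eq] using h.closure hf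

theorem sq_integral_abs_le_measureReal_mul_integral_sq {α : Type*} [MeasurableSpace α]
    {μ : Measure α} [IsFiniteMeasure μ] {f : α → ℝ} (hf : Integrable f μ)
    (hf2 : Integrable (fun x => f x ^ 2) μ) :
    (∫ x, |f x| ∂μ) ^ 2 ≤ μ.real univ * ∫ x, f x ^ 2 ∂μ := by
  have hquad : ∀ t : ℝ,
      0 ≤ μ.real univ * (t * t) + (-2 * ∫ x, |f x| ∂μ) * t + ∫ x, f x ^ 2 ∂μ := by
    intro t
    calc 0 ≤ ∫ x, (|f x| - t) ^ 2 ∂μ := integral_nonneg fun _ => sq_nonneg _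
      _ = ∫ x, (f x ^ 2 + (-2 * t) * |f x| + t * t) ∂μ := by
        congr with x
        rw [← sq_abs (f x)]
        ring
      _ = _ := by
        rw [integral_add (by exact hf2.add (hf.abs.const_mul _)) (integrable_const _),
          integral_add hf2 (hf.abs.const_mul _), integral_const_mul, integral_const, smul_eq_mul]
        ring
  have := discrim_le_zero hquad
  rw [discrim] at this
  linarith

theorem sq_intervalIntegral_abs_le {f : ℝ → ℝ} {a b : ℝ} (hab : a ≤ b)
    (hf : IntervalIntegrable f volume a b)
    (hf2 : IntervalIntegrable (fun x => f x ^ 2) volume a b) :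
    (∫ x in a..b, |f x|) ^ 2 ≤ (b - a) * ∫ x in a..b, f x ^ 2 := by
  have : IsFiniteMeasure (volume.restrict (Ioc a b)) :=
    isFiniteMeasure_restrict.2 measure_Ioc_lt_top.ne
  have := sq_integral_abs_le_measureReal_mul_integral_sq hf.1 hf2.1
  rwa [measureReal_restrict_apply_univ, Real.volume_real_Ioc_of_le hab,
    ← intervalIntegral.integral_of_le hab, ← intervalIntegral.integral_of_le hab] at this

theorem abs_sub_le_integral_abs_of_hasDerivAt {g g' : ℝ → ℝ} {a b : ℝ} (hab : a ≤ b)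
    (hg : ∀ x ∈ uIcc a b, HasDerivAt g (g' x) x) (hg' : IntervalIntegrable g' volume a b) :
    |g b - g a| ≤ ∫ x in a..b, |g' x| := by
  rw [← intervalIntegral.integral_eq_sub_of_hasDerivAt hg hg']
  exact intervalIntegral.abs_integral_le_integral_abs hab

theorem abs_add_abs_le_integral_abs_of_hasDerivAt {g g' : ℝ → ℝ} {a b x₀ : ℝ}
    (hx₀ : x₀ ∈ Icc a b) (hgx₀ : g x₀ = 0)
    (hg : ∀ x ∈ Icc a b, HasDerivAt g (g' x) x) (hg' : IntervalIntegrable g' volume a b) :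
    |g a| + |g b| ≤ ∫ x in a..b, |g' x| := by
  have hab : a ≤ b := hx₀.1.trans hx₀.2
  have ha : a ∈ Icc a b := left_mem_Icc.2 hab
  have hb : b ∈ Icc a b := right_mem_Icc.2 hab
  have hint : ∀ {c d}, c ∈ Icc a b → d ∈ Icc a b → IntervalIntegrable g' volume c d :=
    fun hc hd => hg'.mono_set (by rw [uIcc_of_le hab]; exact uIcc_subset_Icc hc hd)
  have hleft := abs_sub_le_integral_abs_of_hasDerivAt hx₀.1
    (fun x hx => hg x (uIcc_subset_Icc ha hx₀ hx)) (hint ha hx₀)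
  have hright := abs_sub_le_integral_abs_of_hasDerivAt hx₀.2
    (fun x hx => hg x (uIcc_subset_Icc hx₀ hb hx)) (hint hx₀ hb)
  rw [hgx₀, zero_sub, abs_neg] at hleft
  rw [hgx₀, sub_zero] at hright
  rw [← intervalIntegral.integral_add_adjacent_intervals (hint ha hx₀).abs (hint hx₀ hb).abs]
  linarith

theorem sq_abs_add_abs_le_mul_integral_sq_deriv {g : ℝ → ℝ} (hg : ContDiff ℝ 1 g)
    {a b x₀ : ℝ} (hx₀ : x₀ ∈ Icc a b) (hgx₀ : g x₀ = 0) :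
    (|g a| + |g b|) ^ 2 ≤ (b - a) * ∫ x in a..b, deriv g x ^ 2 := by
  have hg' : Continuous (deriv g) := hg.continuous_deriv le_rfl
  have hL1 : |g a| + |g b| ≤ ∫ x in a..b, |deriv g x| :=
    abs_add_abs_le_integral_abs_of_hasDerivAt hx₀ hgx₀
      (fun x _ => (hg.differentiable one_ne_zero x).hasDerivAt) (hg'.intervalIntegrable _ _)
  calc (|g a| + |g b|) ^ 2 ≤ (∫ x in a..b, |deriv g x|) ^ 2 := by gcongr
    _ ≤ (b - a) * ∫ x in a..b, deriv g x ^ 2 :=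
      sq_intervalIntegral_abs_le (hx₀.1.trans hx₀.2) (hg'.intervalIntegrable _ _)
        ((hg'.pow 2).intervalIntegrable _ _)

theorem shock_profile_endpoint_bounds {ε : ℝ} (hε : ε ∈ Ioo (0:ℝ) 1) {u : ℝ → ℝ} (hu : Continuous u)
    (hleft : ∀ x ∈ Icc (-1:ℝ) 1, x < -ε → u x ∈ Icc (1 - ε) (1 + ε))
    (hright : ∀ x ∈ Icc (-1:ℝ) 1, ε < x → u x ∈ Icc (-1 - ε) (-1 + ε)) :
    1 - ε ≤ u (-ε) ∧ u ε ≤ -1 + ε :=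
  ⟨(hu.mapsTo_Icc_of_mapsTo_Ioo (by linarith [hε.2]) isClosed_Icc
      (fun x hx => hleft x ⟨hx.1.le, by linarith [hx.2, hε.1]⟩ hx.2)
      (right_mem_Icc.2 (by linarith [hε.2]))).1,
    (hu.mapsTo_Icc_of_mapsTo_Ioo hε.2 isClosed_Icc
      (fun x hx => hright x ⟨by linarith [hx.1, hε.1], hx.2.le⟩ hx.1)
      (left_mem_Icc.2 hε.2.le)).2⟩

theorem stmt_1_general (T ε : ℝ) (hε : ε ∈ Set.Ioo (0:ℝ) 1)
    (u : ℝ → ℝ) (hu : ContDiff ℝ 1 u)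
    (hleft : ∀ x ∈ Set.Icc (-1:ℝ) 1, x < -ε → u x ∈ Set.Icc (1 - ε) (1 + ε))
    (hright : ∀ x ∈ Set.Icc (-1:ℝ) 1, ε < x → u x ∈ Set.Icc (-1 - ε) (-1 + ε)) :
    Real.sqrt T * (1 - ε)^2 / (2 * Real.sqrt ε) ≤
      Real.sqrt (∫ _t in (0:ℝ)..T, ∫ x in (-1:ℝ)..1,
        (deriv (fun y => (u y)^2 / 2) x)^2) := by
  obtain ⟨hu_at_neg, hu_at_pos⟩ := shock_profile_endpoint_bounds hε hu.continuous hleft hright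
  obtain ⟨hε0, hε1⟩ := hε
  set g : ℝ → ℝ := fun y => (u y)^2 / 2
  obtain ⟨x₀, hx₀, hux₀⟩ := intermediate_value_Icc' (by linarith : -ε ≤ ε)
    hu.continuous.continuousOn (⟨by linarith, by linarith⟩ : (0 : ℝ) ∈ Icc (u ε) (u (-ε)))
  have hjump : (1 - ε) ^ 2 ≤ |g (-ε)| + |g ε| := by
    simp only [g, abs_of_nonneg (by positivity : 0 ≤ u (-ε) ^ 2 / 2),
      abs_of_nonneg (by positivity : 0 ≤ u ε ^ 2 / 2)]
    nlinarith
  have hsq : Continuous fun x => deriv g x ^ 2 :=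
    (((hu.pow 2).div_const 2).continuous_deriv le_rfl).pow 2
  have hI : (1 - ε) ^ 4 ≤ 2 * ε * ∫ x in (-1:ℝ)..1, deriv g x ^ 2 :=
    calc (1 - ε) ^ 4 ≤ (|g (-ε)| + |g ε|) ^ 2 := by nlinarith
      _ ≤ 2 * ε * ∫ x in (-ε)..ε, deriv g x ^ 2 := by
        simpa only [sub_neg_eq_add, ← two_mul] using
          sq_abs_add_abs_le_mul_integral_sq_deriv ((hu.pow 2).div_const 2) hx₀ (by simp [hux₀])
      _ ≤ 2 * ε * ∫ x in (-1:ℝ)..1, deriv g x ^ 2 := by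
        gcongr
        exact intervalIntegral.integral_mono_interval (by linarith) (by linarith) (by linarith)
          (Filter.Eventually.of_forall fun _ => sq_nonneg _) (hsq.intervalIntegrable _ _)
  have hI_nonneg : 0 ≤ ∫ x in (-1:ℝ)..1, deriv g x ^ 2 :=
    intervalIntegral.integral_nonneg (by norm_num) fun _ _ => sq_nonneg _
  rw [intervalIntegral.integral_const, sub_zero, smul_eq_mul, Real.sqrt_mul' _ hI_nonneg,
    mul_div_assoc]
  gcongr
  apply Real.le_sqrt_of_sq_le
  rw [div_pow, mul_pow, Real.sq_sqrt hε0.le, div_le_iff₀ (by positivity)]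
  nlinarith

/-- The L² norm of the Burgers residual of a time-independent
smoothed standing-shock profile over `(0,T) × (-1,1)` is at least
`√T (1-ε)² / (2√ε)`, which blows up as `ε → 0`. -/
theorem stmt_1 (T ε : ℝ) (hT : 0 < T) (hε : ε ∈ Set.Ioo (0:ℝ) 1)
    (u : ℝ → ℝ) (hu : ContDiff ℝ 1 u)
    (hleft : ∀ x ∈ Set.Icc (-1:ℝ) 1, x < -ε → u x ∈ Set.Icc (1 - ε) (1 + ε))
    (hright : ∀ x ∈ Set.Icc (-1:ℝ) 1, ε < x → u x ∈ Set.Icc (-1 - ε) (-1 + ε)) :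
    Real.sqrt T * (1 - ε)^2 / (2 * Real.sqrt ε) ≤
      Real.sqrt (∫ _t in (0:ℝ)..T, ∫ x in (-1:ℝ)..1,
        (deriv (fun y => (u y)^2 / 2) x)^2) :=
  stmt_1_general T ε hε u hu hleft hright
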